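/- Fix β > 1/2 and d ∈ ℕ. Define N(r,d) = #{ n ∈ ℤ^d : ∏_{j=1}^d (1+|n_j|) log^{2β}(e+|n_j|) ≤ r }. Then there is a constant C (depending on β, d) with N(r,d) ≤ C r log^{−2β}(e+r) for all r ≥ 1. -/
import Mathlib




open Real Finset

noncomputable def Wt (β : ℝ) (n : ℤ) : ℝ :=
  (1 + |(n : ℝ)|) * Real.log (Real.exp 1 + |(n : ℝ)|) ^ (2 * β)

lemma one_le_logE {x : ℝ} (hx : 0 ≤ x) : 1 ≤ Real.log (Real.exp 1 + x) := by
  have h1 : Real.exp 1 ≤ Real.exp 1 + x := by linarith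
  calc (1:ℝ) = Real.log (Real.exp 1) := (Real.log_exp 1).symm
  _ ≤ _ := Real.log_le_log (Real.exp_pos 1) h1

lemma rpow_neg_le {x y c : ℝ} (hx : 0 < x) (hxy : x ≤ y) (hc : 0 ≤ c) :
    y ^ (-c) ≤ x ^ (-c) := by
  rw [Real.rpow_neg (le_trans hx.le hxy), Real.rpow_neg hx.le]
  exact inv_anti₀ (Real.rpow_pos_of_pos hx c) (Real.rpow_le_rpow hx.le hxy hc)

lemma div_rpow_neg {x a c : ℝ} (hx : 0 ≤ x) (ha : 0 < a) :
    (x/a) ^ (-c) = a ^ c * x ^ (-c) := by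
  rw [Real.rpow_neg (by positivity), Real.rpow_neg hx, Real.div_rpow hx ha.le, inv_div,
    div_eq_mul_inv]

lemma logE_pow_ge (k : ℕ) : ((k:ℝ)+1)/3 ≤ Real.log (Real.exp 1 + 2^k) := by
  have hp : (0:ℝ) < 2^k := by positivity
  by_cases hk : k ≤ 2
  · have h1 : ((k:ℝ)+1)/3 ≤ 1 := by
      have : (k:ℝ) ≤ 2 := by exact_mod_cast hk
      linarith
    exact le_trans h1 (one_le_logE hp.le)
  · push_neg at hk
    have hk3 : (3:ℝ) ≤ (k:ℝ) := by exact_mod_cast hk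
    have h2 : Real.log (2^k) ≤ Real.log (Real.exp 1 + 2^k) :=
      Real.log_le_log hp (by linarith [Real.exp_pos 1])
    rw [Real.log_pow] at h2
    have hl2 : (0.6931471803 : ℝ) < Real.log 2 := Real.log_two_gt_d9
    have : ((k:ℝ)+1)/3 ≤ (k:ℝ) * Real.log 2 := by nlinarith
    linarith

lemma card_abs_le (X : ℝ) (hX : 0 ≤ X) :
    (({n : ℤ | |(n:ℝ)| ≤ X}).ncard : ℝ) ≤ 2 * X + 1 := by
  have hsub : {n : ℤ | |(n:ℝ)| ≤ X} ⊆ ↑(Finset.Icc (-⌊X⌋) ⌊X⌋) := by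
    intro n hn
    simp only [Set.mem_setOf_eq] at hn
    rw [abs_le] at hn
    simp only [Finset.coe_Icc, Set.mem_Icc]
    exact ⟨by rw [neg_le]; exact Int.le_floor.2 (by push_cast; linarith),
      Int.le_floor.2 hn.2⟩
  have h1 := Set.ncard_le_ncard hsub (Finset.Icc (-⌊X⌋) ⌊X⌋).finite_toSet
  rw [Set.ncard_coe_finset, Int.card_Icc] at h1
  have hfl : (0:ℤ) ≤ ⌊X⌋ := Int.le_floor.2 (by simpa using hX)
  have h3 : ((⌊X⌋:ℝ)) ≤ X := Int.floor_le X
  have hz : ((⌊X⌋ + 1 - -⌊X⌋).toNat : ℤ) = 2 * ⌊X⌋ + 1 := by omega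
  have h2 : ((⌊X⌋ + 1 - -⌊X⌋).toNat : ℝ) = 2 * (⌊X⌋:ℝ) + 1 := by exact_mod_cast hz
  calc (({n : ℤ | |(n:ℝ)| ≤ X}).ncard : ℝ) ≤ ((⌊X⌋ + 1 - -⌊X⌋).toNat : ℝ) := by exact_mod_cast h1
  _ = 2 * (⌊X⌋:ℝ) + 1 := h2
  _ ≤ 2 * X + 1 := by linarith

lemma finite_abs_le (X : ℝ) : ({n : ℤ | |(n:ℝ)| ≤ X}).Finite := by
  apply Set.Finite.subset (Finset.Icc (-⌈X⌉) ⌈X⌉).finite_toSet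
  intro n hn
  simp only [Set.mem_setOf_eq] at hn
  rw [abs_le] at hn
  simp only [Finset.coe_Icc, Set.mem_Icc]
  constructor
  · have : (-⌈X⌉ : ℝ) ≤ (n:ℝ) := by
      have := Int.le_ceil X; push_cast at this ⊢; linarith [hn.1]
    exact_mod_cast this
  · have : (n:ℝ) ≤ (⌈X⌉:ℝ) := le_trans hn.2 (Int.le_ceil X)
    exact_mod_cast this

lemma pow_log_le {β : ℝ} (hβ : 1/2 < β) (r : ℝ) (hr : 1 ≤ r) :
    Real.log (Real.exp 1 + r) ^ (2*β) ≤
      ((4*β) ^ (2*β) * (Real.exp 1 + 1) ^ ((1:ℝ)/2)) * Real.sqrt r := by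
  have hβ0 : (0:ℝ) < β := by linarith
  have he : (0:ℝ) < Real.exp 1 := Real.exp_pos 1
  have hr0 : (0:ℝ) < r := by linarith
  have hx : (0:ℝ) < Real.exp 1 + r := by linarith
  have hε : (0:ℝ) < 1/(4*β) := by positivity
  have hlog := Real.log_le_rpow_div hx.le hε
  have hlog0 : 0 ≤ Real.log (Real.exp 1 + r) := by linarith [one_le_logE (le_of_lt hr0)]
  have h1 : Real.log (Real.exp 1 + r) ^ (2*β) ≤ ((Real.exp 1 + r) ^ (1/(4*β)) / (1/(4*β))) ^ (2*β) :=
    Real.rpow_le_rpow hlog0 hlog (by linarith)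
  have e1 : ((Real.exp 1 + r) ^ (1/(4*β))) ^ (2*β) = (Real.exp 1 + r) ^ ((1:ℝ)/2) := by
    rw [← Real.rpow_mul hx.le]; congr 1; field_simp; ring
  have h2 : ((Real.exp 1 + r) ^ (1/(4*β)) / (1/(4*β))) ^ (2*β)
      = (Real.exp 1 + r) ^ ((1:ℝ)/2) * (4*β) ^ (2*β) := by
    rw [div_rpow (Real.rpow_nonneg hx.le _) hε.le, e1, one_div (4*β),
      Real.inv_rpow (by positivity)]
    field_simp
  have h3 : (Real.exp 1 + r) ^ ((1:ℝ)/2) ≤ (Real.exp 1 + 1) ^ ((1:ℝ)/2) * r ^ ((1:ℝ)/2) := by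
    rw [← Real.mul_rpow (by positivity) hr0.le]
    apply Real.rpow_le_rpow hx.le _ (by norm_num)
    nlinarith
  have h4 : (0:ℝ) < (4*β) ^ (2*β) := Real.rpow_pos_of_pos (by positivity) _
  have hsq : r ^ ((1:ℝ)/2) = Real.sqrt r := (Real.sqrt_eq_rpow r).symm
  calc Real.log (Real.exp 1 + r) ^ (2*β) ≤ (Real.exp 1 + r) ^ ((1:ℝ)/2) * (4*β) ^ (2*β) := by
        rw [← h2]; exact h1
  _ ≤ ((Real.exp 1 + 1) ^ ((1:ℝ)/2) * r ^ ((1:ℝ)/2)) * (4*β) ^ (2*β) :=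
        mul_le_mul_of_nonneg_right h3 h4.le
  _ = ((4*β) ^ (2*β) * (Real.exp 1 + 1) ^ ((1:ℝ)/2)) * r ^ ((1:ℝ)/2) := by ring
  _ = ((4*β) ^ (2*β) * (Real.exp 1 + 1) ^ ((1:ℝ)/2)) * Real.sqrt r := by rw [hsq]

section
variable {β : ℝ}

lemma Wt_ge (hβ : 1/2 < β) (n : ℤ) : 1 + |(n:ℝ)| ≤ Wt β n := by
  have h : 1 ≤ Real.log (Real.exp 1 + |(n:ℝ)|) ^ (2*β) :=
    Real.one_le_rpow (one_le_logE (abs_nonneg (n:ℝ))) (by linarith)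
  have h2 : (0:ℝ) ≤ 1 + |(n:ℝ)| := by positivity
  rw [Wt]; nlinarith [abs_nonneg (n:ℝ)]

lemma one_le_Wt (hβ : 1/2 < β) (n : ℤ) : 1 ≤ Wt β n :=
  le_trans (by simp [abs_nonneg] : (1:ℝ) ≤ 1 + |(n:ℝ)|) (Wt_ge hβ n)

lemma Wt_pos (hβ : 1/2 < β) (n : ℤ) : 0 < Wt β n :=
  lt_of_lt_of_le one_pos (one_le_Wt hβ n)

lemma oneDset_sub {X : ℝ} (hβ : 1/2 < β) : {n : ℤ | Wt β n ≤ X} ⊆ {n : ℤ | |(n:ℝ)| ≤ X} := by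
  intro n hn
  simp only [Set.mem_setOf_eq] at *
  have := Wt_ge hβ n
  linarith

lemma oneD (hβ : 1/2 < β) :
    ∃ C₁ : ℝ, 0 < C₁ ∧ ∀ r : ℝ, 1 ≤ r →
      (({n : ℤ | Wt β n ≤ r}).ncard : ℝ) ≤ C₁ * r * Real.log (Real.exp 1 + r) ^ (-(2*β)) := by
  set c : ℝ := (4*β) ^ (2*β) * (Real.exp 1 + 1) ^ ((1:ℝ)/2) with hc
  have hc0 : 0 < c := by
    apply mul_pos (Real.rpow_pos_of_pos (by linarith) _) (Real.rpow_pos_of_pos (by positivity) _)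
  refine ⟨4*c + 2*(2:ℝ)^(2*β), by positivity, fun r hr => ?_⟩
  have hr0 : (0:ℝ) < r := by linarith
  set L : ℝ := Real.log (Real.exp 1 + r) with hL
  have hL1 : 1 ≤ L := one_le_logE hr0.le
  have hL0 : 0 < L := by linarith
  have hΛ : L ^ (2*β) ≤ c * Real.sqrt r := pow_log_le hβ r hr
  have hΛ0 : 0 < L ^ (2*β) := Real.rpow_pos_of_pos hL0 _
  have hLneg : L ^ (-(2*β)) = (L ^ (2*β))⁻¹ := by
    rw [Real.rpow_neg hL0.le]
  set R : ℝ := 2^(2*β) * r * L ^ (-(2*β)) with hR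
  have hR0 : 0 ≤ R := by
    rw [hR, hLneg]; positivity
  have hsq0 : 0 ≤ Real.sqrt r := Real.sqrt_nonneg r
  have hsub : {n : ℤ | Wt β n ≤ r} ⊆ {n : ℤ | |(n:ℝ)| ≤ Real.sqrt r} ∪ {n : ℤ | |(n:ℝ)| ≤ R} := by
    intro n hn
    simp only [Set.mem_setOf_eq] at hn
    by_cases h : |(n:ℝ)| ≤ Real.sqrt r
    · exact Or.inl h
    · right
      push_neg at h
      have h1 : Real.sqrt (Real.exp 1 + r) ≤ Real.exp 1 + Real.sqrt r := by
        have : Real.exp 1 + r ≤ (Real.exp 1 + Real.sqrt r)^2 := by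
          have hs : Real.sqrt r ^ 2 = r := Real.sq_sqrt hr0.le
          nlinarith [Real.exp_pos 1, Real.one_le_exp (zero_le_one (α := ℝ))]
        calc Real.sqrt (Real.exp 1 + r) ≤ Real.sqrt ((Real.exp 1 + Real.sqrt r)^2) :=
              Real.sqrt_le_sqrt this
        _ = Real.exp 1 + Real.sqrt r := Real.sqrt_sq (by positivity)
      have h2 : L / 2 ≤ Real.log (Real.exp 1 + |(n:ℝ)|) := by
        have hm : Real.sqrt (Real.exp 1 + r) ≤ Real.exp 1 + |(n:ℝ)| := by linarith
        have := Real.log_le_log (Real.sqrt_pos.2 (by positivity)) hm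
        rwa [Real.log_sqrt (by positivity), ← hL] at this
      have hlogn0 : 0 < Real.log (Real.exp 1 + |(n:ℝ)|) := by
        have := one_le_logE (abs_nonneg (n:ℝ)); linarith
      have h3 : (L/2) ^ (2*β) ≤ Real.log (Real.exp 1 + |(n:ℝ)|) ^ (2*β) :=
        Real.rpow_le_rpow (by positivity) h2 (by linarith)
      have hp : 0 < (L/2) ^ (2*β) := Real.rpow_pos_of_pos (by positivity) _
      have h4 : (1 + |(n:ℝ)|) * (L/2) ^ (2*β) ≤ r := by
        refine le_trans ?_ hn
        rw [Wt]
        exact mul_le_mul_of_nonneg_left h3 (by positivity)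
      have h5 : (1 + |(n:ℝ)|) ≤ r / (L/2) ^ (2*β) := (le_div_iff₀ hp).2 h4
      have h6 : r / (L/2) ^ (2*β) = R := by
        rw [hR, hLneg]
        rw [Real.div_rpow hL0.le (by norm_num : (0:ℝ) ≤ 2)]
        have h2β : ((2:ℝ)) ^ (2*β) ≠ 0 := ne_of_gt (Real.rpow_pos_of_pos two_pos _)
        field_simp
      simp only [Set.mem_setOf_eq]
      rw [h6] at h5
      linarith
  have hfin1 := finite_abs_le (Real.sqrt r)
  have hfin2 := finite_abs_le R
  have hcard : (({n : ℤ | Wt β n ≤ r}).ncard : ℝ)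
      ≤ (({n : ℤ | |(n:ℝ)| ≤ Real.sqrt r}).ncard : ℝ) + (({n : ℤ | |(n:ℝ)| ≤ R}).ncard : ℝ) := by
    have hu := Set.ncard_le_ncard hsub (hfin1.union hfin2)
    have hU := Set.ncard_union_le {n : ℤ | |(n:ℝ)| ≤ Real.sqrt r} {n : ℤ | |(n:ℝ)| ≤ R}
    exact_mod_cast le_trans hu hU
  have hI0 : 0 < (L ^ (2*β))⁻¹ := inv_pos.2 hΛ0
  have hsr : Real.sqrt r ≤ r := by
    nlinarith [Real.sq_sqrt hr0.le, Real.sqrt_nonneg r]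
  have hone : 1 ≤ c * r * (L ^ (2*β))⁻¹ := by
    have h7 : L ^ (2*β) ≤ c * r := le_trans hΛ (by nlinarith)
    calc (1:ℝ) = L ^ (2*β) * (L ^ (2*β))⁻¹ := by field_simp
    _ ≤ (c * r) * (L ^ (2*β))⁻¹ := mul_le_mul_of_nonneg_right h7 hI0.le
    _ = c * r * (L ^ (2*β))⁻¹ := by ring
  have hsqle : Real.sqrt r ≤ c * r * (L ^ (2*β))⁻¹ := by
    have h8 : Real.sqrt r * L ^ (2*β) ≤ c * r := by
      calc Real.sqrt r * L ^ (2*β) ≤ Real.sqrt r * (c * Real.sqrt r) :=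
            mul_le_mul_of_nonneg_left hΛ hsq0
      _ = c * (Real.sqrt r * Real.sqrt r) := by ring
      _ = c * r := by rw [Real.mul_self_sqrt hr0.le]
    calc Real.sqrt r = (Real.sqrt r * L ^ (2*β)) * (L ^ (2*β))⁻¹ := by field_simp
    _ ≤ (c * r) * (L ^ (2*β))⁻¹ := mul_le_mul_of_nonneg_right h8 hI0.le
    _ = c * r * (L ^ (2*β))⁻¹ := by ring
  have hb1 := card_abs_le (Real.sqrt r) hsq0
  have hb2 := card_abs_le R hR0
  rw [hLneg]
  calc (({n : ℤ | Wt β n ≤ r}).ncard : ℝ)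
      ≤ (2 * Real.sqrt r + 1) + (2 * R + 1) := by linarith
  _ ≤ (4*c + 2*(2:ℝ)^(2*β)) * r * (L ^ (2*β))⁻¹ := by
      rw [hR, hLneg]
      have : (0:ℝ) < (2:ℝ)^(2*β) := Real.rpow_pos_of_pos two_pos _
      nlinarith
end
lemma sum_bound {β : ℝ} (hβ : 1/2 < β) :
    ∃ Z : ℝ, 0 < Z ∧ ∀ (K : ℕ) (r : ℝ), 1 ≤ r → (2:ℝ)^K ≤ r →
      ∑ k ∈ Finset.range (K+1),
          Real.log (Real.exp 1 + 2^k) ^ (-(2*β)) * Real.log (Real.exp 1 + r/2^k) ^ (-(2*β))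
        ≤ Z * Real.log (Real.exp 1 + r) ^ (-(2*β)) := by
  have h2β : (0:ℝ) < 2*β := by linarith
  set g : ℕ → ℝ := fun n => ((n:ℝ)+1) ^ (-(2*β)) with hg
  have hg0 : ∀ n, 0 ≤ g n := fun n => Real.rpow_nonneg (by positivity) _
  have hgsum : Summable g := by
    have h1 : Summable (fun n : ℕ => 1/(n:ℝ) ^ (2*β)) :=
      Real.summable_one_div_nat_rpow.2 (by linarith)
    have h2 := (summable_nat_add_iff 1).2 h1
    apply h2.congr
    intro n
    rw [hg]
    simp only []
    rw [Real.rpow_neg (by positivity), one_div]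
    push_cast
    ring_nf
  set Z₀ : ℝ := ∑' n, g n with hZ₀
  have hZ₀0 : 0 ≤ Z₀ := tsum_nonneg hg0
  refine ⟨(2:ℝ)^(2*β) * 3^(2*β) * 2 * (Z₀ + 1), by positivity, fun K r hr h2K => ?_⟩
  have hr0 : (0:ℝ) < r := by linarith
  set L : ℝ := Real.log (Real.exp 1 + r) with hL
  have hL1 : (1:ℝ) ≤ L := one_le_logE hr0.le
  have hL0 : (0:ℝ) < L := by linarith
  have hLneg0 : 0 ≤ L ^ (-(2*β)) := Real.rpow_nonneg hL0.le _
  -- termwise bound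
  have hterm : ∀ k ∈ Finset.range (K+1),
      Real.log (Real.exp 1 + 2^k) ^ (-(2*β)) * Real.log (Real.exp 1 + r/2^k) ^ (-(2*β))
        ≤ (2:ℝ)^(2*β) * L ^ (-(2*β)) * (3^(2*β) * g k + 3^(2*β) * g (K-k)) := by
    intro k hk
    rw [Finset.mem_range] at hk
    have hkK : k ≤ K := Nat.lt_succ_iff.1 hk
    have hp : (0:ℝ) < 2^k := by positivity
    have hrk0 : (0:ℝ) < r / 2^k := by positivity
    set a : ℝ := Real.log (Real.exp 1 + 2^k) with ha
    set b : ℝ := Real.log (Real.exp 1 + r/2^k) with hb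
    have ha1 : (1:ℝ) ≤ a := one_le_logE hp.le
    have hb1 : (1:ℝ) ≤ b := one_le_logE hrk0.le
    have ha0 : (0:ℝ) < a := by linarith
    have hb0 : (0:ℝ) < b := by linarith
    have hA0 : 0 ≤ a ^ (-(2*β)) := Real.rpow_nonneg ha0.le _
    have hB0 : 0 ≤ b ^ (-(2*β)) := Real.rpow_nonneg hb0.le _
    -- L ≤ a + b
    have hab : L ≤ a + b := by
      have hx1 : (0:ℝ) < Real.exp 1 + 2^k := by positivity
      have hx2 : (0:ℝ) < Real.exp 1 + r/2^k := by positivity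
      have hcancel : (2:ℝ)^k * (r / 2^k) = r := by field_simp
      have hprod : Real.exp 1 + r ≤ (Real.exp 1 + 2^k) * (Real.exp 1 + r/2^k) := by
        have he1 : (1:ℝ) ≤ Real.exp 1 := Real.one_le_exp zero_le_one
        nlinarith [hx1, hx2, hp, hrk0, Real.exp_pos 1]
      calc L ≤ Real.log ((Real.exp 1 + 2^k) * (Real.exp 1 + r/2^k)) :=
            Real.log_le_log (by positivity) hprod
      _ = a + b := Real.log_mul hx1.ne' hx2.ne'
    -- bounds via g
    have hA : a ^ (-(2*β)) ≤ 3^(2*β) * g k := by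
      have h1 : ((k:ℝ)+1)/3 ≤ a := logE_pow_ge k
      have h2 : (0:ℝ) < ((k:ℝ)+1)/3 := by positivity
      calc a ^ (-(2*β)) ≤ (((k:ℝ)+1)/3) ^ (-(2*β)) := rpow_neg_le h2 h1 h2β.le
      _ = 3^(2*β) * g k := div_rpow_neg (by positivity) (by norm_num)
    have hB : b ^ (-(2*β)) ≤ 3^(2*β) * g (K-k) := by
      have hle : (2:ℝ)^(K-k) ≤ r / 2^k := by
        rw [le_div_iff₀ hp, ← pow_add]
        rw [Nat.sub_add_cancel hkK]
        exact h2K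
      have h1 : (((K-k:ℕ):ℝ)+1)/3 ≤ b := by
        refine le_trans (logE_pow_ge (K-k)) ?_
        exact Real.log_le_log (by positivity) (by linarith)
      have h2 : (0:ℝ) < (((K-k:ℕ):ℝ)+1)/3 := by positivity
      calc b ^ (-(2*β)) ≤ ((((K-k:ℕ):ℝ)+1)/3) ^ (-(2*β)) := rpow_neg_le h2 h1 h2β.le
      _ = 3^(2*β) * g (K-k) := div_rpow_neg (by positivity) (by norm_num)
    -- max argument
    have hhalf : (L/2) ^ (-(2*β)) = 2^(2*β) * L ^ (-(2*β)) := div_rpow_neg hL0.le two_pos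
    have hmain : a ^ (-(2*β)) * b ^ (-(2*β))
        ≤ 2^(2*β) * L ^ (-(2*β)) * (a ^ (-(2*β)) + b ^ (-(2*β))) := by
      rcases le_total a b with h | h
      · have hbL : L/2 ≤ b := by linarith
        have : b ^ (-(2*β)) ≤ 2^(2*β) * L ^ (-(2*β)) := by
          rw [← hhalf]; exact rpow_neg_le (by linarith) hbL h2β.le
        nlinarith
      · have haL : L/2 ≤ a := by linarith
        have : a ^ (-(2*β)) ≤ 2^(2*β) * L ^ (-(2*β)) := by
          rw [← hhalf]; exact rpow_neg_le (by linarith) haL h2β.le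
        nlinarith
    calc a ^ (-(2*β)) * b ^ (-(2*β))
        ≤ 2^(2*β) * L ^ (-(2*β)) * (a ^ (-(2*β)) + b ^ (-(2*β))) := hmain
    _ ≤ (2:ℝ)^(2*β) * L ^ (-(2*β)) * (3^(2*β) * g k + 3^(2*β) * g (K-k)) := by
        have h20 : (0:ℝ) ≤ (2:ℝ)^(2*β) := Real.rpow_nonneg (by norm_num) _
        apply mul_le_mul_of_nonneg_left (by linarith) (by positivity)
  -- sum up
  have hsum := Finset.sum_le_sum hterm
  have hgsumle : ∑ k ∈ Finset.range (K+1), g k ≤ Z₀ + 1 := by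
    have := Summable.sum_le_tsum (Finset.range (K+1)) (fun n _ => hg0 n) hgsum
    linarith
  have hrefl : ∑ k ∈ Finset.range (K+1), g (K-k) = ∑ k ∈ Finset.range (K+1), g k := by
    have := Finset.sum_range_reflect g (K+1)
    simpa using this
  calc ∑ k ∈ Finset.range (K+1),
          Real.log (Real.exp 1 + 2^k) ^ (-(2*β)) * Real.log (Real.exp 1 + r/2^k) ^ (-(2*β))
      ≤ ∑ k ∈ Finset.range (K+1),
          (2:ℝ)^(2*β) * L ^ (-(2*β)) * (3^(2*β) * g k + 3^(2*β) * g (K-k)) := hsum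
  _ = (2:ℝ)^(2*β) * L ^ (-(2*β)) * 3^(2*β) *
        ((∑ k ∈ Finset.range (K+1), g k) + ∑ k ∈ Finset.range (K+1), g (K-k)) := by
      rw [← Finset.sum_add_distrib, Finset.mul_sum]
      congr 1; ext k; ring
  _ ≤ (2:ℝ)^(2*β) * L ^ (-(2*β)) * 3^(2*β) * (2 * (Z₀ + 1)) := by
      rw [hrefl]
      apply mul_le_mul_of_nonneg_left (by linarith) (by positivity)
  _ = (2:ℝ)^(2*β) * 3^(2*β) * 2 * (Z₀ + 1) * L ^ (-(2*β)) := by ring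

section
variable {β : ℝ} (hβ : 1/2 < β)
include hβ

lemma one_le_prodW {d : ℕ} (v : Fin d → ℤ) : 1 ≤ ∏ j, Wt β (v j) := by
  calc (1:ℝ) = ∏ _j : Fin d, (1:ℝ) := by simp
  _ ≤ ∏ j, Wt β (v j) :=
    Finset.prod_le_prod (fun j _ => zero_le_one) (fun j _ => one_le_Wt hβ (v j))

lemma single_le_prodW {d : ℕ} (v : Fin d → ℤ) (i : Fin d) : Wt β (v i) ≤ ∏ j, Wt β (v j) := by
  rw [← Finset.mul_prod_erase Finset.univ _ (Finset.mem_univ i)]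
  have h1 : (1:ℝ) ≤ ∏ j ∈ Finset.univ.erase i, Wt β (v j) := by
    calc (1:ℝ) = ∏ _j ∈ Finset.univ.erase i, (1:ℝ) := by simp
    _ ≤ _ := Finset.prod_le_prod (fun j _ => zero_le_one) (fun j _ => one_le_Wt hβ (v j))
  nlinarith [Wt_pos hβ (v i)]

lemma Aset_finite (d : ℕ) (r : ℝ) : ({v : Fin d → ℤ | ∏ j, Wt β (v j) ≤ r}).Finite := by
  apply Set.Finite.subset (Set.Finite.pi (fun _ : Fin d => finite_abs_le r))
  intro v hv
  simp only [Set.mem_setOf_eq] at hv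
  simp only [Set.mem_pi, Set.mem_univ, forall_true_left, Set.mem_setOf_eq]
  intro j
  have h1 := le_trans (single_le_prodW hβ v j) hv
  have h2 := Wt_ge hβ (v j)
  linarith

lemma Aset_empty (d : ℕ) (r : ℝ) (hr : r < 1) :
    ({v : Fin d → ℤ | ∏ j, Wt β (v j) ≤ r}) = ∅ := by
  ext v
  simp only [Set.mem_setOf_eq, Set.mem_empty_iff_false, iff_false, not_le]
  exact lt_of_lt_of_le hr (one_le_prodW hβ v)

lemma step_decomp (d : ℕ) (r : ℝ) (hr : 1 ≤ r) :
    (({v : Fin (d+1) → ℤ | ∏ j, Wt β (v j) ≤ r}).ncard : ℝ) ≤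
      ∑ k ∈ Finset.range (Nat.log 2 ⌊r⌋₊ + 1),
        (({n : ℤ | Wt β n ≤ (2:ℝ)^(k+1)}).ncard : ℝ) *
        (({u : Fin d → ℤ | ∏ j, Wt β (u j) ≤ r / (2:ℝ)^k}).ncard : ℝ) := by
  classical
  set K := Nat.log 2 ⌊r⌋₊ with hK
  have hfinA := Aset_finite hβ (d+1) r
  set t : Finset (Fin (d+1) → ℤ) := hfinA.toFinset with ht
  have htmem : ∀ v, v ∈ t ↔ ∏ j, Wt β (v j) ≤ r := by
    intro v; rw [ht, Set.Finite.mem_toFinset]; rfl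
  set kf : ℤ → ℕ := fun n => Nat.log 2 ⌊Wt β n⌋₊ with hkf
  have hmapsto : ∀ v ∈ t, kf (v 0) ∈ Finset.range (K+1) := by
    intro v hv
    rw [htmem] at hv
    have h1 : Wt β (v 0) ≤ r := le_trans (single_le_prodW hβ v 0) hv
    have h2 : ⌊Wt β (v 0)⌋₊ ≤ ⌊r⌋₊ := Nat.floor_le_floor h1
    have h3 : kf (v 0) ≤ K := Nat.log_mono_right h2
    rw [Finset.mem_range]; omega
  rw [show (({v : Fin (d+1) → ℤ | ∏ j, Wt β (v j) ≤ r}).ncard) = t.card by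
    rw [← Set.ncard_coe_finset t, ht, Set.Finite.coe_toFinset]]
  rw [Finset.card_eq_sum_card_fiberwise hmapsto]
  have hfiber : ∀ k ∈ Finset.range (K+1),
      ((t.filter fun v => kf (v 0) = k).card : ℝ) ≤
        (({n : ℤ | Wt β n ≤ (2:ℝ)^(k+1)}).ncard : ℝ) *
        (({u : Fin d → ℤ | ∏ j, Wt β (u j) ≤ r / (2:ℝ)^k}).ncard : ℝ) := by
    intro k hk
    have hfin1 : ({n : ℤ | Wt β n ≤ (2:ℝ)^(k+1)}).Finite :=
      Set.Finite.subset (finite_abs_le ((2:ℝ)^(k+1))) (oneDset_sub hβ)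
    have hfin2 := Aset_finite hβ d (r / (2:ℝ)^k)
    have hinj : ∀ v ∈ (t.filter fun v => kf (v 0) = k), ∀ w ∈ (t.filter fun v => kf (v 0) = k),
        (fun v : Fin (d+1) → ℤ => ((v 0 : ℤ), Fin.tail v)) v =
        (fun v : Fin (d+1) → ℤ => ((v 0 : ℤ), Fin.tail v)) w → v = w := by
      intro v _ w _ heq
      simp only [Prod.mk.injEq] at heq
      funext j
      refine Fin.cases ?_ ?_ j
      · exact heq.1
      · intro i
        exact congrFun heq.2 i
    have hmaps : ∀ v ∈ (t.filter fun v => kf (v 0) = k),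
        ((v 0 : ℤ), Fin.tail v) ∈ hfin1.toFinset ×ˢ hfin2.toFinset := by
      intro v hv
      rw [Finset.mem_filter] at hv
      obtain ⟨hvt, hvk⟩ := hv
      rw [htmem] at hvt
      have hsplit : ∏ j : Fin (d+1), Wt β (v j)
          = Wt β (v 0) * ∏ j : Fin d, Wt β (Fin.tail v j) := Fin.prod_univ_succ _
      have hW0 : 0 < Wt β (v 0) := Wt_pos hβ (v 0)
      set m := ⌊Wt β (v 0)⌋₊ with hm
      have hm1 : 1 ≤ m := Nat.le_floor (by exact_mod_cast one_le_Wt hβ (v 0))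
      have hlow : 2^k ≤ m := by
        rw [← hvk]
        exact Nat.pow_log_le_self 2 (by omega)
      have hhigh : m < 2^(k+1) := by
        rw [← hvk]
        exact Nat.lt_pow_succ_log_self (by norm_num) m
      have hlowR : (2:ℝ)^k ≤ Wt β (v 0) := by
        calc (2:ℝ)^k = ((2^k : ℕ) : ℝ) := by push_cast; ring
        _ ≤ (m : ℝ) := by exact_mod_cast hlow
        _ ≤ Wt β (v 0) := Nat.floor_le hW0.le
      have hhighR : Wt β (v 0) ≤ (2:ℝ)^(k+1) := by
        have h1 : Wt β (v 0) < (m : ℝ) + 1 := Nat.lt_floor_add_one _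
        have h2 : ((m : ℕ) : ℝ) + 1 ≤ (2:ℝ)^(k+1) := by
          have h3 : m + 1 ≤ 2^(k+1) := hhigh
          calc ((m : ℕ) : ℝ) + 1 = ((m + 1 : ℕ) : ℝ) := by push_cast; ring
          _ ≤ (((2:ℕ)^(k+1) : ℕ) : ℝ) := by exact_mod_cast h3
          _ = (2:ℝ)^(k+1) := by push_cast; ring
        linarith
      rw [Finset.mem_product]
      constructor
      · rw [Set.Finite.mem_toFinset]
        exact hhighR
      · rw [Set.Finite.mem_toFinset]
        simp only [Set.mem_setOf_eq]
        have hP1 : 1 ≤ ∏ j : Fin d, Wt β (Fin.tail v j) := one_le_prodW hβ _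
        have hWP : Wt β (v 0) * ∏ j : Fin d, Wt β (Fin.tail v j) ≤ r := by
          rw [← hsplit]; exact hvt
        have hp : (0:ℝ) < (2:ℝ)^k := by positivity
        rw [le_div_iff₀ hp]
        nlinarith
    have hcle := Finset.card_le_card_of_injOn _ hmaps hinj
    rw [Finset.card_product] at hcle
    have e1 : hfin1.toFinset.card = ({n : ℤ | Wt β n ≤ (2:ℝ)^(k+1)}).ncard := by
      rw [← Set.ncard_coe_finset, Set.Finite.coe_toFinset]
    have e2 : hfin2.toFinset.card = ({u : Fin d → ℤ | ∏ j, Wt β (u j) ≤ r / (2:ℝ)^k}).ncard := by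
      rw [← Set.ncard_coe_finset, Set.Finite.coe_toFinset]
    rw [e1, e2] at hcle
    exact_mod_cast hcle
  calc ((∑ k ∈ Finset.range (K+1), (t.filter fun v => kf (v 0) = k).card : ℕ) : ℝ)
      = ∑ k ∈ Finset.range (K+1), ((t.filter fun v => kf (v 0) = k).card : ℝ) := by
        push_cast; ring
  _ ≤ _ := Finset.sum_le_sum hfiber

end

lemma mainInd {β : ℝ} (hβ : 1/2 < β) (d : ℕ) (hd : 1 ≤ d) :
    ∃ C : ℝ, 0 < C ∧ ∀ r : ℝ, 1 ≤ r →
      (({v : Fin d → ℤ | ∏ j, Wt β (v j) ≤ r}).ncard : ℝ) ≤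
        C * r * Real.log (Real.exp 1 + r) ^ (-(2*β)) := by
  induction d, hd using Nat.le_induction with
  | base =>
    obtain ⟨C₁, hC₁0, hC₁⟩ := oneD hβ
    refine ⟨C₁, hC₁0, fun r hr => ?_⟩
    have hinj : Function.Injective (fun n : ℤ => fun _ : Fin 1 => n) := by
      intro a b h
      exact congrFun h 0
    have himg : {v : Fin 1 → ℤ | ∏ j, Wt β (v j) ≤ r}
        = (fun n : ℤ => fun _ : Fin 1 => n) '' {n : ℤ | Wt β n ≤ r} := by
      ext v
      simp only [Set.mem_setOf_eq, Set.mem_image, Fin.prod_univ_one]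
      constructor
      · intro h
        refine ⟨v 0, h, ?_⟩
        funext j
        have : j = 0 := Subsingleton.elim j 0
        rw [this]
      · rintro ⟨n, hn, rfl⟩
        exact hn
    rw [himg, Set.ncard_image_of_injective _ hinj]
    exact hC₁ r hr
  | succ d hd IH =>
    obtain ⟨C₁, hC₁0, hC₁⟩ := oneD hβ
    obtain ⟨Cd, hCd0, hCd⟩ := IH
    obtain ⟨Z, hZ0, hZ⟩ := sum_bound hβ
    refine ⟨2*C₁*Cd*Z, by positivity, fun r hr => ?_⟩
    have hr0 : (0:ℝ) < r := by linarith
    set K := Nat.log 2 ⌊r⌋₊ with hK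
    set L : ℝ := Real.log (Real.exp 1 + r) with hL
    have hL1 : (1:ℝ) ≤ L := one_le_logE hr0.le
    have hLneg0 : 0 ≤ L ^ (-(2*β)) := Real.rpow_nonneg (by linarith) _
    have h2K : (2:ℝ)^K ≤ r := by
      have h1 : 2^K ≤ ⌊r⌋₊ :=
        Nat.pow_log_le_self 2 (by
          have : 1 ≤ ⌊r⌋₊ := Nat.le_floor (by exact_mod_cast hr)
          omega)
      calc (2:ℝ)^K = ((2^K : ℕ) : ℝ) := by push_cast; ring
      _ ≤ (⌊r⌋₊ : ℝ) := by exact_mod_cast h1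
      _ ≤ r := Nat.floor_le hr0.le
    have hstep := step_decomp hβ d r hr
    have hterm : ∀ k ∈ Finset.range (K+1),
        (({n : ℤ | Wt β n ≤ (2:ℝ)^(k+1)}).ncard : ℝ) *
          (({u : Fin d → ℤ | ∏ j, Wt β (u j) ≤ r / (2:ℝ)^k}).ncard : ℝ)
        ≤ (2*C₁*Cd*r) *
          (Real.log (Real.exp 1 + 2^k) ^ (-(2*β)) * Real.log (Real.exp 1 + r/2^k) ^ (-(2*β))) := by
      intro k hk
      have hp : (0:ℝ) < (2:ℝ)^k := by positivity
      have hp1 : (0:ℝ) < (2:ℝ)^(k+1) := by positivity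
      have h1le : (1:ℝ) ≤ (2:ℝ)^(k+1) := one_le_pow₀ (by norm_num)
      have hlogk1 : (1:ℝ) ≤ Real.log (Real.exp 1 + 2^k) := one_le_logE (by positivity)
      have hlogrk1 : (1:ℝ) ≤ Real.log (Real.exp 1 + r/2^k) := one_le_logE (by positivity)
      set A : ℝ := Real.log (Real.exp 1 + 2^k) ^ (-(2*β)) with hA
      set B : ℝ := Real.log (Real.exp 1 + r/2^k) ^ (-(2*β)) with hB
      have hA0 : 0 ≤ A := Real.rpow_nonneg (by linarith) _
      have hB0 : 0 ≤ B := Real.rpow_nonneg (by linarith) _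
      have hb1 : (({n : ℤ | Wt β n ≤ (2:ℝ)^(k+1)}).ncard : ℝ)
          ≤ C₁ * (2:ℝ)^(k+1) * A := by
        refine le_trans (hC₁ ((2:ℝ)^(k+1)) h1le) ?_
        have hmono : Real.log (Real.exp 1 + 2^k) ≤ Real.log (Real.exp 1 + 2^(k+1)) := by
          apply Real.log_le_log (by positivity)
          have h2 : (2:ℝ)^k ≤ (2:ℝ)^(k+1) := by
            apply pow_le_pow_right₀ (by norm_num) (by omega)
          linarith
        have hAA : Real.log (Real.exp 1 + 2^(k+1)) ^ (-(2*β)) ≤ A :=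
          rpow_neg_le (by linarith) hmono (by linarith)
        have hnn : (0:ℝ) ≤ C₁ * (2:ℝ)^(k+1) := by positivity
        exact mul_le_mul_of_nonneg_left hAA hnn
      have hb2 : (({u : Fin d → ℤ | ∏ j, Wt β (u j) ≤ r / (2:ℝ)^k}).ncard : ℝ)
          ≤ Cd * (r/(2:ℝ)^k) * B := by
        by_cases hc : r / (2:ℝ)^k < 1
        · rw [Aset_empty hβ d _ hc, Set.ncard_empty]
          have : (0:ℝ) ≤ Cd * (r/(2:ℝ)^k) * B := by
            have : (0:ℝ) ≤ r/(2:ℝ)^k := by positivity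
            positivity
          simpa using this
        · push_neg at hc
          exact hCd (r/(2:ℝ)^k) hc
      have hcard1nn : (0:ℝ) ≤ (({n : ℤ | Wt β n ≤ (2:ℝ)^(k+1)}).ncard : ℝ) := by positivity
      have hcard2nn : (0:ℝ) ≤ (({u : Fin d → ℤ | ∏ j, Wt β (u j) ≤ r / (2:ℝ)^k}).ncard : ℝ) := by
        positivity
      have hmul : (({n : ℤ | Wt β n ≤ (2:ℝ)^(k+1)}).ncard : ℝ) *
            (({u : Fin d → ℤ | ∏ j, Wt β (u j) ≤ r / (2:ℝ)^k}).ncard : ℝ)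
          ≤ (C₁ * (2:ℝ)^(k+1) * A) * (Cd * (r/(2:ℝ)^k) * B) := by
        apply mul_le_mul hb1 hb2 hcard2nn
        positivity
      refine le_trans hmul (le_of_eq ?_)
      have hpow : (2:ℝ)^(k+1) * (r/(2:ℝ)^k) = 2*r := by
        rw [pow_succ]
        field_simp
      calc (C₁ * (2:ℝ)^(k+1) * A) * (Cd * (r/(2:ℝ)^k) * B)
          = C₁ * Cd * ((2:ℝ)^(k+1) * (r/(2:ℝ)^k)) * (A * B) := by ring
      _ = C₁ * Cd * (2*r) * (A * B) := by rw [hpow]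
      _ = (2*C₁*Cd*r) * (A * B) := by ring
    have hsum := Finset.sum_le_sum hterm
    have hZsum := hZ K r hr h2K
    calc (({v : Fin (d+1) → ℤ | ∏ j, Wt β (v j) ≤ r}).ncard : ℝ)
        ≤ ∑ k ∈ Finset.range (K+1),
            (({n : ℤ | Wt β n ≤ (2:ℝ)^(k+1)}).ncard : ℝ) *
            (({u : Fin d → ℤ | ∏ j, Wt β (u j) ≤ r / (2:ℝ)^k}).ncard : ℝ) := hstep
    _ ≤ ∑ k ∈ Finset.range (K+1), (2*C₁*Cd*r) *
            (Real.log (Real.exp 1 + 2^k) ^ (-(2*β)) * Real.log (Real.exp 1 + r/2^k) ^ (-(2*β))) :=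
          hsum
    _ = (2*C₁*Cd*r) * ∑ k ∈ Finset.range (K+1),
            Real.log (Real.exp 1 + 2^k) ^ (-(2*β)) * Real.log (Real.exp 1 + r/2^k) ^ (-(2*β)) := by
          rw [Finset.mul_sum]
    _ ≤ (2*C₁*Cd*r) * (Z * L ^ (-(2*β))) := by
          apply mul_le_mul_of_nonneg_left hZsum (by positivity)
    _ = 2*C₁*Cd*Z * r * L ^ (-(2*β)) := by ring

/-- Counting lemma: for `β > 1/2` and `d ∈ ℕ`, the number
`N(r,d) = #{n ∈ ℤ^d : ∏_j (1+|n_j|) log^{2β}(e+|n_j|) ≤ r}` satisfies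
`N(r,d) ≤ C r log^{-2β}(e+r)` for all `r ≥ 1`. -/
theorem counting_lemma (β : ℝ) (hβ : 1 / 2 < β) (d : ℕ) (hd : 1 ≤ d) :
    ∃ C : ℝ, 0 < C ∧ ∀ r : ℝ, 1 ≤ r →
      (Nat.card {v : Fin d → ℤ //
          (∏ j, (1 + |(v j : ℝ)|) * Real.log (Real.exp 1 + |(v j : ℝ)|) ^ (2 * β)) ≤ r} : ℝ) ≤
        C * r * Real.log (Real.exp 1 + r) ^ (-(2 * β)) := by
  obtain ⟨C, hC0, hC⟩ := mainInd hβ d hd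
  refine ⟨C, hC0, fun r hr => ?_⟩
  have heq : Nat.card {v : Fin d → ℤ //
      (∏ j, (1 + |(v j : ℝ)|) * Real.log (Real.exp 1 + |(v j : ℝ)|) ^ (2 * β)) ≤ r}
      = ({v : Fin d → ℤ | ∏ j, Wt β (v j) ≤ r}).ncard := by
    rw [← Nat.card_coe_set_eq]
    rfl
  rw [heq]
  exact hC r hr
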